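/- Let 0 < p₁, p₂ < 1, η₁, η₂ > 0, C₁, C₂ > 0, and define ω̂ᵢ(λ) = -Cᵢ Γ(-pᵢ)[(λ+ηᵢ)^{pᵢ} - ηᵢ^{pᵢ}]/λ. Suppose c > 0 and ω̂₁(λ) = c ω̂₂(cλ) for all λ in an infinite subset of (0,∞) (equivalently, the equation has infinitely many solutions on (0,∞)). Then p₁ = p₂, η₁ = η₂/c, and C₁ = c^{p₁} C₂. -/

import Mathlib

/-!
Writing `A₁ = -C₁ Γ(-p₁)` and `A₂ = -C₂ Γ(-p₂) c^{p₂}`, both nonzero, the relation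
`ω̂₁(λ) = c ω̂₂(cλ)` says that
`F(λ) = A₁ ((λ + η₁)^{p₁} - η₁^{p₁}) - A₂ ((λ + η₂/c)^{p₂} - (η₂/c)^{p₂})`
vanishes on `S`. The function `F` is real-analytic on a half-line containing `[0, ∞)`, so if `S`
is bounded it has an accumulation point there and `F` vanishes identically; in either case `F`
has zeros tending to infinity. Dividing by `λ^{max p₁ p₂}` and letting `λ → ∞` forces
`p₁ = p₂` and `A₁ = A₂`; then `(λ + η₁)^p - (λ + η₂/c)^p → 0` (as `p < 1`) forces
`η₁^p = (η₂/c)^p`.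
-/

open Real Filter Set Topology

theorem Real.Gamma_neg_ne_zero {p : ℝ} (hp : 0 < p) (hp' : p < 1) : Gamma (-p) ≠ 0 :=
  Gamma_ne_zero fun m hm => by
    have hpm : p = m := neg_inj.1 hm
    rw [hpm] at hp hp'
    norm_cast at hp hp'
    omega

theorem Real.analyticAt_rpow_const {x : ℝ} (p : ℝ) (hx : 0 < x) :
    AnalyticAt ℝ (fun y : ℝ => y ^ p) x := by
  refine (((analyticAt_log hx).mul (analyticAt_const (v := p))).rexp).congr ?_
  filter_upwards [lt_mem_nhds hx] with y hy
  exact (rpow_def_of_pos hy p).symm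

theorem Real.analyticOnNhd_rpow_add_const (a p : ℝ) :
    AnalyticOnNhd ℝ (fun x : ℝ => (x + a) ^ p) (Ioi (-a)) := fun x hx =>
  (analyticAt_rpow_const p (by linarith [mem_Ioi.1 hx])).comp (analyticAt_id.add analyticAt_const)

theorem AnalyticOnNhd.eqOn_zero_of_infinite_zeros {𝕜 E : Type*} [NontriviallyNormedField 𝕜]
    [NormedAddCommGroup E] [NormedSpace 𝕜 E] {f : 𝕜 → E} {U K S : Set 𝕜}
    (hf : AnalyticOnNhd 𝕜 f U) (hU : IsPreconnected U) (hK : IsCompact K) (hKU : K ⊆ U)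
    (hS : S.Infinite) (hSK : S ⊆ K) (hfS : EqOn f 0 S) : EqOn f 0 U := by
  obtain ⟨z₀, hz₀K, hacc⟩ := hS.exists_accPt_of_subset_isCompact hK hSK
  exact hf.eqOn_zero_of_preconnected_of_frequently_eq_zero hU (hKU hz₀K)
    ((accPt_iff_frequently_nhdsNE.1 hacc).mono hfS)

theorem AnalyticOnNhd.frequently_atTop_eq_zero {f : ℝ → ℝ} {a b : ℝ} {S : Set ℝ}
    (hf : AnalyticOnNhd ℝ f (Ioi a)) (hab : a < b) (hS : S ⊆ Ici b) (hSinf : S.Infinite)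
    (hfS : EqOn f 0 S) : ∃ᶠ x in atTop, f x = 0 := by
  by_cases hbdd : BddAbove S
  · obtain ⟨M, hM⟩ := hbdd
    have hzero := hf.eqOn_zero_of_infinite_zeros (convex_Ioi a).isPreconnected
      (isCompact_Icc (a := b) (b := M)) (fun x hx => hab.trans_le hx.1) hSinf
      (fun x hx => ⟨hS hx, hM hx⟩) hfS
    exact (eventually_gt_atTop a).frequently.mono fun x hx => hzero hx
  · rw [not_bddAbove_iff] at hbdd
    exact frequently_atTop.2 fun x =>
      let ⟨y, hyS, hxy⟩ := hbdd x
      ⟨y, hxy.le, hfS hyS⟩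

theorem tendsto_rpow_add_div_rpow_atTop (a p : ℝ) :
    Tendsto (fun x : ℝ => (x + a) ^ p / x ^ p) atTop (𝓝 1) := by
  have hratio : Tendsto (fun x : ℝ => 1 + a / x) atTop (𝓝 1) := by
    simpa using (tendsto_const_nhds (x := (1 : ℝ))).add
      ((tendsto_const_nhds (x := a)).div_atTop tendsto_id)
  have hpow := ((continuousAt_rpow_const 1 p (Or.inl one_ne_zero)).tendsto.comp hratio)
  rw [one_rpow] at hpow
  refine hpow.congr' ?_
  filter_upwards [eventually_gt_atTop (max 0 (-a))] with x hx
  have hx0 : 0 < x := (le_max_left _ _).trans_lt hx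
  have hxa : 0 ≤ x + a := by linarith [le_max_right 0 (-a)]
  rw [Function.comp_apply, ← div_rpow hxa hx0.le, add_div, div_self hx0.ne']

theorem tendsto_rpow_add_div_rpow_atTop_of_lt (a : ℝ) {p q : ℝ} (hpq : p < q) :
    Tendsto (fun x : ℝ => (x + a) ^ p / x ^ q) atTop (𝓝 0) := by
  have hdecay : Tendsto (fun x : ℝ => x ^ (p - q)) atTop (𝓝 0) := by
    simpa using tendsto_rpow_neg_atTop (sub_pos.2 hpq)
  have hprod := (tendsto_rpow_add_div_rpow_atTop a p).mul hdecay
  rw [one_mul] at hprod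
  refine hprod.congr' ?_
  filter_upwards [eventually_gt_atTop 0] with x hx
  rw [rpow_sub hx, div_mul_div_comm, mul_comm (x ^ p),
    mul_div_mul_right _ _ (rpow_pos_of_pos hx p).ne']

theorem Real.rpow_sub_rpow_le_rpow_sub_one_mul {u v p : ℝ} (hu : 0 < u) (huv : u ≤ v)
    (hp : p ≤ 1) : v ^ p - u ^ p ≤ v ^ (p - 1) * (v - u) := by
  have hv : 0 < v := hu.trans_le huv
  have hratio : u / v ≤ (u / v) ^ p :=
    self_le_rpow_of_le_one (div_pos hu hv).le ((div_le_one hv).2 huv) hp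
  have hscaled := mul_le_mul_of_nonneg_right hratio (rpow_pos_of_pos hv p).le
  rw [div_rpow hu.le hv.le, div_mul_cancel₀ _ (rpow_pos_of_pos hv p).ne'] at hscaled
  have hexpand : v ^ (p - 1) * (v - u) = v ^ p - u / v * v ^ p := by
    rw [rpow_sub_one hv.ne']
    field_simp
  linarith

theorem tendsto_rpow_add_sub_rpow_add_atTop_of_le (p : ℝ) {a b : ℝ} (hp : 0 ≤ p) (hp' : p < 1)
    (hab : a ≤ b) : Tendsto (fun x : ℝ => (x + b) ^ p - (x + a) ^ p) atTop (𝓝 0) := by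
  have hdecay : Tendsto (fun x : ℝ => (x + b) ^ (p - 1) * (b - a)) atTop (𝓝 0) := by
    have := (tendsto_rpow_neg_atTop (sub_pos.2 hp')).comp
      (tendsto_atTop_add_const_right _ b tendsto_id)
    simpa [Function.comp_def] using this.mul_const (b - a)
  refine squeeze_zero' ?_ ?_ hdecay
  · filter_upwards [eventually_gt_atTop (-a)] with x hx
    exact sub_nonneg.2 (rpow_le_rpow (by linarith) (by linarith) hp)
  · filter_upwards [eventually_gt_atTop (-a)] with x hx
    simpa using rpow_sub_rpow_le_rpow_sub_one_mul (u := x + a) (v := x + b) (by linarith)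
      (by linarith) hp'.le

theorem tendsto_rpow_add_sub_rpow_add_atTop (p a b : ℝ) (hp : 0 ≤ p) (hp' : p < 1) :
    Tendsto (fun x : ℝ => (x + a) ^ p - (x + b) ^ p) atTop (𝓝 0) := by
  rcases le_total a b with hab | hba
  · simpa using (tendsto_rpow_add_sub_rpow_add_atTop_of_le p hp hp' hab).neg
  · exact tendsto_rpow_add_sub_rpow_add_atTop_of_le p hp hp' hba

theorem exponent_eq_and_coeff_eq_of_frequently_eq {p₁ p₂ a₁ a₂ A₁ A₂ K : ℝ} (hp₁ : 0 < p₁)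
    (hp : p₂ ≤ p₁) (hA₁ : A₁ ≠ 0)
    (h : ∃ᶠ x in atTop, A₁ * (x + a₁) ^ p₁ - A₂ * (x + a₂) ^ p₂ = K) :
    p₂ = p₁ ∧ A₂ = A₁ := by
  have hK : Tendsto (fun x : ℝ => K / x ^ p₁) atTop (𝓝 0) :=
    tendsto_const_nhds.div_atTop (tendsto_rpow_atTop hp₁)
  have hdiv : ∃ᶠ x in atTop,
      A₁ * ((x + a₁) ^ p₁ / x ^ p₁) - A₂ * ((x + a₂) ^ p₂ / x ^ p₁) = K / x ^ p₁ :=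
    h.mono fun x hx => by rw [← hx]; ring
  have hlead := (tendsto_rpow_add_div_rpow_atTop a₁ p₁).const_mul A₁
  rcases hp.lt_or_eq with hlt | rfl
  · have := tendsto_nhds_unique_of_frequently_eq
      (hlead.sub ((tendsto_rpow_add_div_rpow_atTop_of_lt a₂ hlt).const_mul A₂)) hK hdiv
    simp only [mul_one, mul_zero, sub_zero] at this
    exact absurd this hA₁
  · have := tendsto_nhds_unique_of_frequently_eq
      (hlead.sub ((tendsto_rpow_add_div_rpow_atTop a₂ p₂).const_mul A₂)) hK hdiv
    exact ⟨rfl, by linarith⟩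

theorem eq_of_frequently_rpow_increment_eq {p₁ p₂ a₁ a₂ A₁ A₂ : ℝ} (hp₁ : 0 < p₁)
    (hp₁' : p₁ < 1) (hp₂ : 0 < p₂) (ha₁ : 0 ≤ a₁) (ha₂ : 0 ≤ a₂) (hA₁ : A₁ ≠ 0) (hA₂ : A₂ ≠ 0)
    (h : ∃ᶠ x in atTop, A₁ * ((x + a₁) ^ p₁ - a₁ ^ p₁) = A₂ * ((x + a₂) ^ p₂ - a₂ ^ p₂)) :
    p₁ = p₂ ∧ a₁ = a₂ ∧ A₁ = A₂ := by
  have hK : ∃ᶠ x in atTop,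
      A₁ * (x + a₁) ^ p₁ - A₂ * (x + a₂) ^ p₂ = A₁ * a₁ ^ p₁ - A₂ * a₂ ^ p₂ :=
    h.mono fun x hx => by linarith
  obtain ⟨rfl, rfl⟩ : p₁ = p₂ ∧ A₁ = A₂ := by
    rcases le_total p₂ p₁ with hp | hp
    · exact (exponent_eq_and_coeff_eq_of_frequently_eq hp₁ hp hA₁ hK).imp Eq.symm Eq.symm
    · exact exponent_eq_and_coeff_eq_of_frequently_eq (a₁ := a₂) (a₂ := a₁)
        (K := A₂ * a₂ ^ p₂ - A₁ * a₁ ^ p₁) hp₂ hp hA₂ (hK.mono fun x hx => by linarith)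
  refine ⟨rfl, ?_, rfl⟩
  have hconst : ∃ᶠ x in atTop, (x + a₁) ^ p₁ - (x + a₂) ^ p₁ = a₁ ^ p₁ - a₂ ^ p₁ :=
    h.mono fun x hx => by linarith [mul_left_cancel₀ hA₁ hx]
  have := tendsto_nhds_unique_of_frequently_eq
    (tendsto_rpow_add_sub_rpow_add_atTop p₁ a₁ a₂ hp₁.le hp₁') tendsto_const_nhds hconst
  exact (rpow_left_inj ha₁ ha₂ hp₁.ne').1 (by linarith)

theorem Real.rpow_mul_add_sub_rpow {c l η : ℝ} (p : ℝ) (hc : 0 < c) (hl : 0 ≤ l) (hη : 0 ≤ η) :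
    (c * l + η) ^ p - η ^ p = c ^ p * ((l + η / c) ^ p - (η / c) ^ p) := by
  have hηc : 0 ≤ η / c := div_nonneg hη hc.le
  rw [mul_sub, ← mul_rpow hc.le (by positivity), ← mul_rpow hc.le hηc, mul_add,
    mul_div_cancel₀ _ hc.ne']

theorem eq_of_rpow_increment_eqOn_infinite {p₁ p₂ a₁ a₂ A₁ A₂ : ℝ} {S : Set ℝ} (hp₁ : 0 < p₁)
    (hp₁' : p₁ < 1) (hp₂ : 0 < p₂) (ha₁ : 0 < a₁) (ha₂ : 0 < a₂) (hA₁ : A₁ ≠ 0) (hA₂ : A₂ ≠ 0)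
    (hS : S ⊆ Ici 0) (hSinf : S.Infinite)
    (h : ∀ x ∈ S, A₁ * ((x + a₁) ^ p₁ - a₁ ^ p₁) = A₂ * ((x + a₂) ^ p₂ - a₂ ^ p₂)) :
    p₁ = p₂ ∧ a₁ = a₂ ∧ A₁ = A₂ := by
  have hpow₁ := (analyticOnNhd_rpow_add_const a₁ p₁).mono
    (Ioi_subset_Ioi (neg_le_neg (min_le_left a₁ a₂)))
  have hpow₂ := (analyticOnNhd_rpow_add_const a₂ p₂).mono
    (Ioi_subset_Ioi (neg_le_neg (min_le_right a₁ a₂)))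
  have hF : AnalyticOnNhd ℝ (fun x : ℝ =>
      A₁ * ((x + a₁) ^ p₁ - a₁ ^ p₁) - A₂ * ((x + a₂) ^ p₂ - a₂ ^ p₂)) (Ioi (-min a₁ a₂)) :=
    (analyticOnNhd_const.mul (hpow₁.sub analyticOnNhd_const)).sub
      (analyticOnNhd_const.mul (hpow₂.sub analyticOnNhd_const))
  have hfreq := hF.frequently_atTop_eq_zero (neg_neg_of_pos (lt_min ha₁ ha₂)) hS hSinf
    fun x hx => sub_eq_zero.2 (h x hx)
  exact eq_of_frequently_rpow_increment_eq hp₁ hp₁' hp₂ ha₁.le ha₂.le hA₁ hA₂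
    (hfreq.mono fun x hx => sub_eq_zero.1 hx)

/-- If the tempered-stable tail Laplace transforms satisfy
ω̂₁(λ) = c ω̂₂(cλ) on an infinite subset of (0,∞), then p₁ = p₂, η₁ = η₂/c
and C₁ = c^{p₁} C₂. -/
theorem tempered_stable_scaling_identification
    (p₁ p₂ η₁ η₂ C₁ C₂ c : ℝ)
    (hp₁ : 0 < p₁) (hp₁' : p₁ < 1) (hp₂ : 0 < p₂) (hp₂' : p₂ < 1)
    (hη₁ : 0 < η₁) (hη₂ : 0 < η₂) (hC₁ : 0 < C₁) (hC₂ : 0 < C₂) (hc : 0 < c)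
    (ωhat₁ ωhat₂ : ℝ → ℝ)
    (h₁ : ∀ l : ℝ, ωhat₁ l = -C₁ * Real.Gamma (-p₁) * ((l + η₁) ^ p₁ - η₁ ^ p₁) / l)
    (h₂ : ∀ l : ℝ, ωhat₂ l = -C₂ * Real.Gamma (-p₂) * ((l + η₂) ^ p₂ - η₂ ^ p₂) / l)
    (S : Set ℝ) (hS : S ⊆ Set.Ioi (0:ℝ)) (hSinf : S.Infinite)
    (heq : ∀ l ∈ S, ωhat₁ l = c * ωhat₂ (c * l)) :
    p₁ = p₂ ∧ η₁ = η₂ / c ∧ C₁ = c ^ p₁ * C₂ := by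
  have hΓ₁ := Real.Gamma_neg_ne_zero hp₁ hp₁'
  have hΓ₂ := Real.Gamma_neg_ne_zero hp₂ hp₂'
  obtain ⟨hp, hη, hA⟩ := eq_of_rpow_increment_eqOn_infinite hp₁ hp₁' hp₂ hη₁ (div_pos hη₂ hc)
    (mul_ne_zero (neg_ne_zero.2 hC₁.ne') hΓ₁)
    (mul_ne_zero (mul_ne_zero (neg_ne_zero.2 hC₂.ne') hΓ₂) (rpow_pos_of_pos hc p₂).ne')
    (hS.trans Ioi_subset_Ici_self) hSinf fun l hlS => by
      have hl : 0 < l := hS hlS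
      have := heq l hlS
      rwa [h₁, h₂, ← mul_div_assoc, mul_div_mul_left _ _ hc.ne', div_left_inj' hl.ne',
        rpow_mul_add_sub_rpow p₂ hc hl.le hη₂.le, ← mul_assoc] at this
  refine ⟨hp, hη, ?_⟩
  subst hp
  exact mul_right_cancel₀ hΓ₁ (by linear_combination -hA)
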